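/- If y^b is a minimal monomial generator of E_q^{(2)}, then b_A ≤ 2 for every nonempty A ⊆ [q], and b_{[q]} = 2. -/

import Mathlib

open MvPolynomial

/-- Index type: nonempty subsets of `[q]`. -/
abbrev EIdx (q : ℕ) := {A : Finset (Fin q) // A.Nonempty}

/-- The generator `ε_i = ∏_{A ∋ i} y_A` of the extremal ideal. -/
noncomputable def extGen (k : Type*) [Field k] (q : ℕ) (i : Fin q) :
    MvPolynomial (EIdx q) k :=
  ∏ A : EIdx q, if i ∈ A.1 then X A else 1

/-- The `q`-extremal ideal `E_q = (ε_1, …, ε_q)`. -/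
noncomputable def extIdeal (k : Type*) [Field k] (q : ℕ) :
    Ideal (MvPolynomial (EIdx q) k) :=
  Ideal.span (Set.range (extGen k q))

/-- The `r`-th symbolic power of a square-free monomial ideal: the intersection
of the `r`-th powers of its minimal primes. -/
def symbPow {R : Type*} [CommRing R] (I : Ideal R) (r : ℕ) : Ideal R :=
  ⨅ P ∈ I.minimalPrimes, P ^ r

/-- The monomial `y^b = ∏_{∅ ≠ A ⊆ [q]} y_A^{b_A}`. -/
noncomputable def ymonF (k : Type*) [Field k] (q : ℕ)
    (b : Finset (Fin q) → ℕ) : MvPolynomial (EIdx q) k :=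
  ∏ A : EIdx q, X A ^ b A.1

/-- A minimal set cover of `[q]`: a collection of nonempty subsets whose union is
`[q]`, with no member contained in the union of the others. -/
def IsMinSetCover (q : ℕ) (C : Finset (Finset (Fin q))) : Prop :=
  (∀ A ∈ C, A.Nonempty) ∧ C.sup id = Finset.univ ∧
    ∀ A ∈ C, ¬ A ⊆ (C.erase A).sup id

/-! Every minimal prime of `E_q` is generated by variables, and a monomial `y^c` lies in the
square of `(y_B : B ∈ V)` iff `∑_{B ∈ V} c_B ≥ 2`. Lowering an exponent `b_A ≥ 3` by one keeps
this sum at least `2` for every `V`, so `y^b` would not be minimal. On the other hand every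
generator `ε_i` is divisible by `y_{[q]}`, so `(y_{[q]})` is a minimal prime of `E_q`, and
membership in its square gives `b_{[q]} ≥ 2`. -/

namespace MvPolynomial

open Ideal Function

variable {σ R : Type*} [CommRing R]

theorem X_mem_span_X_image_iff [Nontrivial R] {s : Set σ} {i : σ} :
    (X i : MvPolynomial σ R) ∈ span (X '' s) ↔ i ∈ s := by
  classical
  simp [mem_ideal_span_X_image, support_X, Finsupp.single_apply]

theorem isPrime_span_X_image [IsDomain R] (s : Set σ) :
    (span (X '' s) : Ideal (MvPolynomial σ R)).IsPrime := by
  let kill : MvPolynomial σ R →ₐ[R] MvPolynomial σ R := aeval (sᶜ.indicator X)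
  have sub_kill_mem (p : MvPolynomial σ R) : p - kill p ∈ span (X '' s) := by
    induction p using MvPolynomial.induction_on with
    | C a => simp
    | add p q hp hq => simpa [sub_add_sub_comm] using add_mem hp hq
    | mul_X p i hp =>
      by_cases hi : i ∈ s
      · have hXi : (X i : MvPolynomial σ R) ∈ span (X '' s) := subset_span ⟨i, hi, rfl⟩
        simpa [kill, hi] using mul_mem_left _ p hXi
      · simpa [kill, hi, sub_mul] using mul_mem_right (X i) _ hp
  have : span (X '' s) = RingHom.ker kill := by
    refine le_antisymm (span_le.2 ?_) fun p hp => ?_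
    · rintro _ ⟨i, hi, rfl⟩
      simp [kill, hi]
    · simpa [(RingHom.mem_ker).1 hp] using sub_kill_mem p
  rw [this]
  exact RingHom.ker_isPrime _

section Monomial

variable [Fintype σ] [DecidableEq σ]

theorem prod_X_pow_eq_X_mul_prod_X_pow_update {c : σ → ℕ} {a : σ} (ha : c a ≠ 0) :
    ∏ i, (X i : MvPolynomial σ R) ^ c i = X a * ∏ i, X i ^ update c a (c a - 1) i := by
  have hc : c a = c a - 1 + 1 := by omega
  simp_rw [apply_update (fun i e => (X i : MvPolynomial σ R) ^ e),
    Finset.prod_update_of_mem (Finset.mem_univ a),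
    Finset.prod_eq_mul_prod_sdiff_singleton_of_mem (Finset.mem_univ a) (fun i => X i ^ c i)]
  rw [hc, pow_succ', Nat.add_sub_cancel, mul_assoc]

theorem prod_X_pow_mem_span_X_image_pow_iff [Nontrivial R] (V : Finset σ) (c : σ → ℕ)
    (n : ℕ) :
    ∏ i, (X i : MvPolynomial σ R) ^ c i ∈ span (X '' (V : Set σ)) ^ n ↔
      n ≤ ∑ i ∈ V, c i := by
  constructor
  · intro h
    let ψ : MvPolynomial σ R →ₐ[R] Polynomial R :=
      aeval fun i => if i ∈ V then Polynomial.X else 1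
    have hψ : Ideal.map ψ (span (X '' (V : Set σ))) ≤ span {Polynomial.X} := by
      rw [map_span, span_le]
      rintro _ ⟨_, ⟨i, hi, rfl⟩, rfl⟩
      simp [ψ, Finset.mem_coe.1 hi]
    have hmem := pow_right_mono hψ n (Ideal.map_pow ψ _ n ▸ mem_map_of_mem ψ h)
    have hval : ψ (∏ i, X i ^ c i) = Polynomial.X ^ ∑ i ∈ V, c i := by
      simp [ψ, ite_pow, Finset.prod_ite_mem, Finset.prod_pow_eq_pow_sum]
    rw [span_singleton_pow, mem_span_singleton, hval, Polynomial.X_pow_dvd_iff] at hmem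
    by_contra! hlt
    simpa using hmem _ hlt
  · induction n generalizing c with
    | zero => simp
    | succ n ih =>
      intro h
      obtain ⟨a, haV, ha⟩ := Finset.exists_ne_zero_of_sum_ne_zero (s := V) (f := c) (by omega)
      rw [prod_X_pow_eq_X_mul_prod_X_pow_update ha, pow_succ']
      refine mul_mem_mul (subset_span ⟨a, haV, rfl⟩) (ih _ ?_)
      rw [Finset.sum_eq_add_sum_sdiff_singleton_of_mem haV] at h
      rw [Finset.sum_update_of_mem haV]
      omega

theorem prod_X_pow_update_mem_span_X_image_pow [Nontrivial R] {V : Finset σ} {c : σ → ℕ}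
    {a : σ} {n : ℕ} (ha : n < c a)
    (h : ∏ i, (X i : MvPolynomial σ R) ^ c i ∈ span (X '' (V : Set σ)) ^ n) :
    ∏ i, (X i : MvPolynomial σ R) ^ update c a (c a - 1) i ∈ span (X '' (V : Set σ)) ^ n := by
  rw [prod_X_pow_mem_span_X_image_pow_iff] at h ⊢
  by_cases haV : a ∈ V
  · rw [Finset.sum_update_of_mem haV]
    omega
  · rwa [Finset.sum_update_of_notMem haV]

end Monomial

end MvPolynomial

open Ideal MvPolynomial

theorem mem_symbPow_iff {R : Type*} [CommRing R] {I : Ideal R} {r : ℕ} {x : R} :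
    x ∈ symbPow I r ↔ ∀ P ∈ I.minimalPrimes, x ∈ P ^ r := by
  simp [symbPow, Submodule.mem_iInf]

section ExtremalIdeal

variable {k : Type*} [Field k] {q : ℕ}

theorem X_dvd_extGen {B : EIdx q} {i : Fin q} (hi : i ∈ B.1) :
    (X B : MvPolynomial (EIdx q) k) ∣ extGen k q i := by
  simpa [extGen, hi] using Finset.dvd_prod_of_mem (fun A : EIdx q =>
    if i ∈ A.1 then (X A : MvPolynomial (EIdx q) k) else 1) (Finset.mem_univ B)

theorem exists_X_mem_of_extGen_mem {P : Ideal (MvPolynomial (EIdx q) k)} [P.IsPrime]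
    {i : Fin q} (h : extGen k q i ∈ P) : ∃ B : EIdx q, i ∈ B.1 ∧ X B ∈ P := by
  obtain ⟨B, -, hB⟩ := IsPrime.prod_mem_iff.1 h
  by_cases hi : i ∈ B.1
  · exact ⟨B, hi, by simpa [hi] using hB⟩
  · simp [hi, ← eq_top_iff_one, IsPrime.ne_top'] at hB

theorem extIdeal_le_span_X_image {V : Set (EIdx q)} (hV : ∀ i, ∃ B ∈ V, i ∈ B.1) :
    extIdeal k q ≤ span (X '' V) := by
  refine span_le.2 ?_
  rintro _ ⟨i, rfl⟩
  obtain ⟨B, hBV, hi⟩ := hV i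
  exact mem_of_dvd _ (X_dvd_extGen hi) (subset_span ⟨B, hBV, rfl⟩)

theorem exists_eq_span_X_image_of_mem_minimalPrimes {P : Ideal (MvPolynomial (EIdx q) k)}
    (hP : P ∈ (extIdeal k q).minimalPrimes) :
    ∃ V : Finset (EIdx q), P = span (X '' (V : Set (EIdx q))) := by
  classical
  obtain ⟨⟨_, hEP⟩, hmin⟩ := hP
  refine ⟨{B | X B ∈ P}.toFinset, le_antisymm (hmin ⟨isPrime_span_X_image _, ?_⟩ ?_) ?_⟩
  · refine extIdeal_le_span_X_image fun i => ?_
    obtain ⟨B, hi, hB⟩ := exists_X_mem_of_extGen_mem (hEP (subset_span ⟨i, rfl⟩))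
    exact ⟨B, by simpa using hB, hi⟩
  all_goals
    rw [span_le]
    rintro _ ⟨B, hB, rfl⟩
    simpa using hB

theorem span_X_singleton_mem_minimalPrimes {u : EIdx q} (hu : u.1 = Finset.univ) :
    span (X '' {u}) ∈ (extIdeal k q).minimalPrimes := by
  refine ⟨⟨isPrime_span_X_image _, extIdeal_le_span_X_image fun i =>
    ⟨u, rfl, hu ▸ Finset.mem_univ i⟩⟩, fun Q ⟨_, hEQ⟩ hQu => ?_⟩
  obtain ⟨i, -⟩ := u.2
  obtain ⟨B, -, hB⟩ := exists_X_mem_of_extGen_mem (hEQ (subset_span ⟨i, rfl⟩))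
  obtain rfl : B ∈ ({u} : Set (EIdx q)) := X_mem_span_X_image_iff.1 (hQu hB)
  simpa [span_le] using hB

theorem ymonF_ite_eq_prod_update (b : Finset (Fin q) → ℕ) (A : EIdx q) :
    ymonF k q (fun B => if B = A.1 then b B - 1 else b B) =
      ∏ B, X B ^ Function.update (fun B : EIdx q => b B.1) A (b A.1 - 1) B := by
  simp only [ymonF, Function.update_apply, ← Subtype.ext_iff]
  refine Finset.prod_congr rfl fun B _ => ?_
  split_ifs with h <;> simp [h]

end ExtremalIdeal

theorem stmt14 (k : Type*) [Field k] (q : ℕ) (hq : 1 ≤ q)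
    (b : Finset (Fin q) → ℕ)
    -- `y^b` is a minimal monomial generator of `E_q^{(2)}`:
    (hmem : ymonF k q b ∈ symbPow (extIdeal k q) 2)
    (hminimal : ∀ A : EIdx q, 0 < b A.1 →
      ymonF k q (fun B => if B = A.1 then b B - 1 else b B) ∉
        symbPow (extIdeal k q) 2) :
    (∀ A : Finset (Fin q), A.Nonempty → b A ≤ 2) ∧ b Finset.univ = 2 := by
  have hb := mem_symbPow_iff.1 hmem
  have hle (A : Finset (Fin q)) (hA : A.Nonempty) : b A ≤ 2 := by
    by_contra! h3
    refine hminimal ⟨A, hA⟩ (Nat.zero_lt_of_lt h3) (mem_symbPow_iff.2 fun P hP => ?_)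
    obtain ⟨V, rfl⟩ := exists_eq_span_X_image_of_mem_minimalPrimes hP
    rw [ymonF_ite_eq_prod_update]
    exact prod_X_pow_update_mem_span_X_image_pow h3 (hb _ hP)
  let u : EIdx q := ⟨Finset.univ, Finset.univ_nonempty_iff.2 ⟨⟨0, hq⟩⟩⟩
  have hu := hb _ (span_X_singleton_mem_minimalPrimes (u := u) rfl)
  rw [← Finset.coe_singleton, ymonF, prod_X_pow_mem_span_X_image_pow_iff] at hu
  exact ⟨hle, le_antisymm (hle _ u.2) (by simpa [u] using hu)⟩
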